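/- arXiv:nlin/0309041 — 6 statements merged into one kernel-verified Lean document; each statement's English description precedes it below -/
import Mathlib

section
/- For u > 0, the function s ↦ arctan(s − u) − arctan(s + u) + 2·arctan(u) is strictly positive for all s ≠ 0. -/
/-!
For `u > 0` the function `g = arctanGap u` is even and vanishes at `0`, and its derivative
`1 / (1 + (s - u)²) - 1 / (1 + (s + u)²)` is positive for `s > 0` because
`(s - u)² < (s + u)²` there. So `g` increases strictly on `[0, ∞)`, giving `g s > g 0 = 0`
for `s > 0`, and evenness covers `s < 0`.
-/

open Real Set

noncomputable def arctanGap (u s : ℝ) : ℝ := arctan (s - u) - arctan (s + u) + 2 * arctan u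

section

variable (u : ℝ)

theorem arctanGap_zero : arctanGap u 0 = 0 := by
  simp only [arctanGap, zero_sub, zero_add, arctan_neg]
  ring

theorem arctanGap_neg (s : ℝ) : arctanGap u (-s) = arctanGap u s := by
  simp only [arctanGap, show -s - u = -(s + u) by ring, show -s + u = -(s - u) by ring,
    arctan_neg]
  ring

theorem hasDerivAt_arctanGap (s : ℝ) :
    HasDerivAt (arctanGap u) (1 / (1 + (s - u) ^ 2) - 1 / (1 + (s + u) ^ 2)) s := by
  have hsub := (hasDerivAt_arctan (s - u)).comp s ((hasDerivAt_id s).sub_const u)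
  have hadd := (hasDerivAt_arctan (s + u)).comp s ((hasDerivAt_id s).add_const u)
  have h := (hsub.sub hadd).add_const (2 * arctan u)
  simp only [Function.comp_def, id, one_div, mul_one] at h ⊢
  exact h

theorem continuous_arctanGap : Continuous (arctanGap u) := by
  unfold arctanGap
  fun_prop

variable {u}

theorem strictMonoOn_arctanGap (hu : 0 < u) : StrictMonoOn (arctanGap u) (Ici 0) := by
  refine strictMonoOn_of_deriv_pos (convex_Ici 0) (continuous_arctanGap u).continuousOn
    fun s hs ↦ ?_
  rw [interior_Ici, mem_Ioi] at hs
  rw [(hasDerivAt_arctanGap u s).deriv, sub_pos]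
  exact one_div_lt_one_div_of_lt (by positivity) (by nlinarith)

theorem arctanGap_pos (hu : 0 < u) {s : ℝ} (hs : s ≠ 0) : 0 < arctanGap u s := by
  wlog hs_pos : 0 < s generalizing s
  · rw [← arctanGap_neg]
    exact this (neg_ne_zero.2 hs) (by grind)
  simpa [arctanGap_zero] using strictMonoOn_arctanGap hu self_mem_Ici hs_pos.le hs_pos

end

theorem g_pos (u : ℝ) (hu : 0 < u) (s : ℝ) (hs : s ≠ 0) :
    0 < Real.arctan (s - u) - Real.arctan (s + u) + 2 * Real.arctan u :=
  arctanGap_pos hu hs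
end

section
/- Let w(s; α) = 2·arctan(tan(α/2) + s) − α for α ∈ (−π, π) and s ∈ ℝ. Then for every s ≠ 0 and every α ∈ (0, π), w(s; −α) > w(s; α). -/
/-!
With `t = tan (α / 2) > 0` we have `arctan t = α / 2` and `tan (-α / 2) = -t`, so
`w(s; -α) - w(s; α) = 2 (2 arctan t - arctan (t + s) - arctan (t - s))`.
This is positive because `x ↦ arctan (t + x) + arctan (t - x)` is even and strictly decreasing
on `[0, ∞)`: its derivative `1 / (1 + (t + x)²) - 1 / (1 + (t - x)²)` is negative for `x > 0`,
as `|t - x| < t + x`.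
-/

open Real Set

lemma hasDerivAt_arctan_add_add_arctan_sub (t x : ℝ) :
    HasDerivAt (fun x => arctan (t + x) + arctan (t - x))
      (1 / (1 + (t + x) ^ 2) - 1 / (1 + (t - x) ^ 2)) x := by
  refine (((hasDerivAt_id x).const_add t).arctan.add
    ((hasDerivAt_id x).const_sub t).arctan).congr_deriv ?_
  simp only [id]
  ring

lemma strictAntiOn_arctan_add_add_arctan_sub {t : ℝ} (ht : 0 < t) :
    StrictAntiOn (fun x => arctan (t + x) + arctan (t - x)) (Ici 0) := by
  refine strictAntiOn_of_deriv_neg (convex_Ici 0)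
    (fun x _ => (hasDerivAt_arctan_add_add_arctan_sub t x).continuousAt.continuousWithinAt) ?_
  intro x hx
  rw [interior_Ici, mem_Ioi] at hx
  rw [(hasDerivAt_arctan_add_add_arctan_sub t x).deriv, sub_neg]
  have hsq : (t - x) ^ 2 < (t + x) ^ 2 := by nlinarith
  exact one_div_lt_one_div_of_lt (by positivity) (by linarith)

lemma arctan_add_add_arctan_sub_lt {t s : ℝ} (ht : 0 < t) (hs : s ≠ 0) :
    arctan (t + s) + arctan (t - s) < 2 * arctan t := by
  have h := strictAntiOn_arctan_add_add_arctan_sub ht self_mem_Ici (mem_Ici.2 (abs_nonneg s))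
    (abs_pos.2 hs)
  simp only [add_zero, sub_zero, ← two_mul] at h
  rcases abs_choice s with hs' | hs' <;> rw [hs'] at h
  · exact h
  · rwa [← sub_eq_add_neg, sub_neg_eq_add, add_comm] at h

theorem w_antisym (s : ℝ) (hs : s ≠ 0) (α : ℝ) (hα : α ∈ Set.Ioo 0 Real.pi) :
    2 * Real.arctan (Real.tan (-α / 2) + s) - (-α) >
      2 * Real.arctan (Real.tan (α / 2) + s) - α := by
  obtain ⟨hα0, hαπ⟩ := hα
  have hlo : -(π / 2) < α / 2 := by linarith
  have hhi : α / 2 < π / 2 := by linarith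
  have ht : 0 < tan (α / 2) := tan_pos_of_pos_of_lt_pi_div_two (by linarith) hhi
  have key := arctan_add_add_arctan_sub_lt ht hs
  rw [arctan_tan hlo hhi] at key
  have hneg : arctan (tan (-α / 2) + s) = -arctan (tan (α / 2) - s) := by
    rw [neg_div, tan_neg, ← arctan_neg, neg_sub, neg_add_eq_sub]
  rw [hneg]
  linarith
end

section
/- Let h, w, P : ℝ → ℝ be continuous 2π-periodic functions with h(θ) + k·w(θ)·P(θ) > 0 for all θ (for some real constant k > 0). Suppose P(−θ) = P(θ) and h(−θ) = h(θ) for all θ, P'(θ) > 0 for θ ∈ (0, π), h(θ) > 0 for θ ∈ (0, π), P(θ) > 0 for all θ, and w(−θ) > w(θ) for θ ∈ (0, π). Then χ := ∫_{−π}^{π} w(θ)P'(θ)/(h(θ) + k·w(θ)·P(θ)) dθ < 0. -/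
/-!
Pairing `θ` with `-θ` folds `χ` onto `(0, π)`. Since `h` and `P` are even and `P'` is odd, the
two halves share the denominator shape `h + c·w` (with `c = k P(θ)`) and carry opposite factors
`±P'(θ)`, so the folded integrand is `P'(θ) · (g(w(θ)) - g(w(-θ)))` with `g(x) = x / (h + c x)`.
As `h > 0`, `g` is strictly increasing wherever its denominator is positive, and `w(θ) < w(-θ)`
makes the folded integrand negative on `(0, π)`.
-/

open intervalIntegral MeasureTheory

theorem deriv_neg_of_even {𝕜 F : Type*} [NontriviallyNormedField 𝕜] [NormedAddCommGroup F]
    [NormedSpace 𝕜 F] {f : 𝕜 → F} (hf : ∀ x, f (-x) = f x) (x : 𝕜) :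
    deriv f (-x) = -deriv f x := by
  have h := deriv_comp_neg f (-x)
  rwa [funext hf, neg_neg] at h

theorem intervalIntegral.integral_neg_self_eq_integral_comp_neg_add {E : Type*}
    [NormedAddCommGroup E] [NormedSpace ℝ E] {f : ℝ → E} {a : ℝ} (hf : IntervalIntegrable f volume (-a) a) :
    ∫ x in -a..a, f x = ∫ x in 0..a, (f (-x) + f x) := by
  have h0 : (0 : ℝ) ∈ Set.uIcc (-a) a := by
    rcases le_total 0 a with ha | ha
    · exact Set.mem_uIcc.mpr (Or.inl ⟨by linarith, ha⟩)
    · exact Set.mem_uIcc.mpr (Or.inr ⟨ha, by linarith⟩)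
  have hleft : IntervalIntegrable f volume (-a) 0 :=
    hf.mono_set (Set.uIcc_subset_uIcc_left h0)
  have hright : IntervalIntegrable f volume 0 a :=
    hf.mono_set (Set.uIcc_subset_uIcc_right h0)
  have hleft' : IntervalIntegrable (fun x => f (-x)) volume 0 a := by
    simpa using ((IntervalIntegrable.iff_comp_neg).mp hleft).symm
  rw [integral_add hleft' hright, integral_comp_neg, neg_zero,
    integral_add_adjacent_intervals hleft hright]

theorem intervalIntegral_neg_of_neg_on {f : ℝ → ℝ} {a b : ℝ}
    (hfi : IntervalIntegrable f volume a b) (hneg : ∀ x ∈ Set.Ioo a b, f x < 0) (hab : a < b) :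
    ∫ x in a..b, f x < 0 := by
  have := intervalIntegral_pos_of_pos_on hfi.neg (fun x hx => neg_pos.mpr (hneg x hx)) hab
  rwa [← neg_pos, ← intervalIntegral.integral_neg]

theorem div_add_mul_lt_div_add_mul {a c x y : ℝ} (ha : 0 < a) (hx : 0 < a + c * x)
    (hy : 0 < a + c * y) (hxy : x < y) : x / (a + c * x) < y / (a + c * y) := by
  rw [div_lt_div_iff₀ hx hy]
  nlinarith

theorem chi_neg_general (h w P : ℝ → ℝ) (k : ℝ)
    (hh : Continuous h) (hw : Continuous w) (hP : ContDiff ℝ 1 P)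
    (hpos : ∀ θ, 0 < h θ + k * w θ * P θ)
    (hPeven : ∀ θ, P (-θ) = P θ) (hheven : ∀ θ, h (-θ) = h θ)
    (hP' : ∀ θ ∈ Set.Ioo 0 Real.pi, 0 < deriv P θ)
    (hhpos : ∀ θ ∈ Set.Ioo 0 Real.pi, 0 < h θ)
    (hww : ∀ θ ∈ Set.Ioo 0 Real.pi, w θ < w (-θ)) :
    (∫ θ in (-Real.pi)..Real.pi,
      w θ * deriv P θ / (h θ + k * w θ * P θ)) < 0 := by
  set f : ℝ → ℝ := fun θ => w θ * deriv P θ / (h θ + k * w θ * P θ) with hf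
  have hfc : Continuous f :=
    (hw.mul (hP.continuous_deriv le_rfl)).div
      (hh.add ((continuous_const.mul hw).mul hP.continuous)) fun θ => (hpos θ).ne'
  have hfold : ∀ θ, f (-θ) + f θ = deriv P θ *
      (w θ / (h θ + k * P θ * w θ) - w (-θ) / (h θ + k * P θ * w (-θ))) := by
    intro θ
    simp only [hf, hheven, hPeven, deriv_neg_of_even hPeven]
    ring
  rw [integral_neg_self_eq_integral_comp_neg_add (hfc.intervalIntegrable _ _)]
  refine intervalIntegral_neg_of_neg_on
    (((hfc.comp continuous_neg).add hfc).intervalIntegrable _ _)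
    (fun θ hθ => ?_) Real.pi_pos
  have hD : 0 < h θ + k * P θ * w θ := by linarith [hpos θ]
  have hD' : 0 < h θ + k * P θ * w (-θ) := by
    have := hpos (-θ); rw [hheven, hPeven] at this; linarith
  rw [hfold]
  exact mul_neg_of_pos_of_neg (hP' θ hθ)
    (sub_neg.mpr (div_add_mul_lt_div_add_mul (hhpos θ hθ) hD hD' (hww θ hθ)))

theorem chi_neg (h w P : ℝ → ℝ) (k : ℝ) (hk : 0 < k)
    (hh : Continuous h) (hw : Continuous w) (hP : ContDiff ℝ 1 P)
    (hhper : Function.Periodic h (2 * Real.pi))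
    (hwper : Function.Periodic w (2 * Real.pi))
    (hPper : Function.Periodic P (2 * Real.pi))
    (hpos : ∀ θ, 0 < h θ + k * w θ * P θ)
    (hPeven : ∀ θ, P (-θ) = P θ) (hheven : ∀ θ, h (-θ) = h θ)
    (hP' : ∀ θ ∈ Set.Ioo 0 Real.pi, 0 < deriv P θ)
    (hhpos : ∀ θ ∈ Set.Ioo 0 Real.pi, 0 < h θ)
    (hPpos : ∀ θ, 0 < P θ)
    (hww : ∀ θ ∈ Set.Ioo 0 Real.pi, w θ < w (-θ)) :
    (∫ θ in (-Real.pi)..Real.pi,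
      w θ * deriv P θ / (h θ + k * w θ * P θ)) < 0 :=
  chi_neg_general h w P k hh hw hP hpos hPeven hheven hP' hhpos hww
end

section
/- Let a, b : [−π, π] → ℝ be continuous with b everywhere strictly positive. Then lim_{ε→0⁺} √ε · ∫_{−π}^{π} (a(θ)/b(θ)) · 1/(ε + b(θ)θ²) dθ = (a(0)/b(0)) · π/√(b(0)). -/
/-!
After the substitution `θ = √ε u`, `√ε ∫ f θ / (ε + b θ θ²) dθ` becomes
`∫ f (√ε u) / (1 + b (√ε u) u²) du` over the rescaled domain. The new integrand tends pointwise
to `f 0 / (1 + b 0 u²)` and is dominated by `M / (1 + m u²)`, where `M` bounds `|f|` and `m > 0`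
is the minimum of `b` on the compact domain; dominated convergence and
`∫ (1 + c u²)⁻¹ du = π / √c` give the limit.
-/

open MeasureTheory Filter Set Real Topology

theorem integrable_inv_one_add_mul_sq {c : ℝ} (hc : 0 < c) :
    Integrable (fun u : ℝ => (1 + c * u ^ 2)⁻¹) := by
  have h := integrable_inv_one_add_sq.comp_mul_left' (sqrt_pos.2 hc).ne'
  simpa only [mul_pow, sq_sqrt hc.le] using h

theorem integral_inv_one_add_mul_sq {c : ℝ} (hc : 0 < c) :
    ∫ u : ℝ, (1 + c * u ^ 2)⁻¹ = π / √c := by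
  have h := Measure.integral_comp_mul_left (fun x : ℝ => (1 + x ^ 2)⁻¹) √c
  simp only [mul_pow, sq_sqrt hc.le, integral_univ_inv_one_add_sq, smul_eq_mul] at h
  rw [h, abs_of_pos (inv_pos.2 (sqrt_pos.2 hc)), inv_mul_eq_div]

/-- The integrand `f θ / (ε + b θ θ²)` after the substitution `θ = √ε u`, multiplied by `ε`. -/
noncomputable def rescaledIntegrand (s : Set ℝ) (f b : ℝ → ℝ) (ε u : ℝ) : ℝ :=
  s.indicator (fun θ => f θ / (1 + b θ * u ^ 2)) (√ε * u)

theorem sqrt_mul_setIntegral_eq_integral_rescaledIntegrand {s : Set ℝ} (hs : MeasurableSet s)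
    (f b : ℝ → ℝ) {ε : ℝ} (hε : 0 < ε) :
    √ε * ∫ θ in s, f θ / (ε + b θ * θ ^ 2) = ∫ u, rescaledIntegrand s f b ε u := by
  have hsε : 0 < √ε := sqrt_pos.2 hε
  have hpoint : ∀ u, rescaledIntegrand s f b ε u =
      ε * s.indicator (fun θ => f θ / (ε + b θ * θ ^ 2)) (√ε * u) := by
    intro u
    by_cases hu : √ε * u ∈ s
    · rw [rescaledIntegrand, indicator_of_mem hu, indicator_of_mem hu, mul_pow, sq_sqrt hε.le,
        show ε + b (√ε * u) * (ε * u ^ 2) = ε * (1 + b (√ε * u) * u ^ 2) by ring,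
        ← mul_div_assoc, mul_div_mul_left _ _ hε.ne']
    · rw [rescaledIntegrand, indicator_of_notMem hu, indicator_of_notMem hu, mul_zero]
  simp_rw [hpoint]
  rw [integral_const_mul, Measure.integral_comp_mul_left, integral_indicator hs, smul_eq_mul,
    abs_of_pos (inv_pos.2 hsε), ← mul_assoc]
  congr 1
  nth_rw 2 [← mul_self_sqrt hε.le]
  rw [mul_assoc, mul_inv_cancel₀ hsε.ne', mul_one]

theorem aestronglyMeasurable_rescaledIntegrand {s : Set ℝ} (hs : MeasurableSet s) {f b : ℝ → ℝ}
    (hf : ContinuousOn f s) (hb : ContinuousOn b s) (hbpos : ∀ θ ∈ s, 0 < b θ) (ε : ℝ) :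
    AEStronglyMeasurable (rescaledIntegrand s f b ε) := by
  have hscale : Continuous fun u : ℝ => √ε * u := continuous_const.mul continuous_id
  have hpre : MeasurableSet ((fun u => √ε * u) ⁻¹' s) := hscale.measurable hs
  have heq : rescaledIntegrand s f b ε = ((fun u => √ε * u) ⁻¹' s).indicator
      fun u => f (√ε * u) / (1 + b (√ε * u) * u ^ 2) := by
    ext u
    by_cases hu : √ε * u ∈ s
    · rw [rescaledIntegrand, indicator_of_mem hu, indicator_of_mem (mem_preimage.2 hu)]
    · rw [rescaledIntegrand, indicator_of_notMem hu, indicator_of_notMem (by exact hu)]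
  rw [heq, aestronglyMeasurable_indicator_iff hpre]
  have hmaps := mapsTo_preimage (fun u => √ε * u) s
  have hbs := hb.comp hscale.continuousOn hmaps
  refine ContinuousOn.aestronglyMeasurable ?_ hpre
  refine (hf.comp hscale.continuousOn hmaps).div (continuousOn_const.add (hbs.mul (continuousOn_pow 2)))
    fun u hu => ?_
  have := hbpos _ hu
  positivity

theorem abs_rescaledIntegrand_le {s : Set ℝ} {f b : ℝ → ℝ} {M m : ℝ} (hM0 : 0 ≤ M)
    (hM : ∀ θ ∈ s, |f θ| ≤ M) (hm : 0 ≤ m) (hbm : ∀ θ ∈ s, m ≤ b θ) (ε u : ℝ) :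
    |rescaledIntegrand s f b ε u| ≤ M * (1 + m * u ^ 2)⁻¹ := by
  by_cases hθ : √ε * u ∈ s
  · rw [rescaledIntegrand, indicator_of_mem hθ]
    have hmb : 1 + m * u ^ 2 ≤ 1 + b (√ε * u) * u ^ 2 := by gcongr; exact hbm _ hθ
    have hden : 0 < 1 + m * u ^ 2 := by positivity
    rw [abs_div, abs_of_pos (hden.trans_le hmb), ← div_eq_mul_inv]
    exact div_le_div₀ hM0 (hM _ hθ) hden hmb
  · rw [rescaledIntegrand, indicator_of_notMem hθ, abs_zero]
    positivity

theorem tendsto_rescaledIntegrand {s : Set ℝ} (hs : s ∈ 𝓝 0) {f b : ℝ → ℝ}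
    (hf : ContinuousAt f 0) (hb : ContinuousAt b 0) (hb0 : 0 < b 0) (u : ℝ) :
    Tendsto (fun ε => rescaledIntegrand s f b ε u) (𝓝[>] 0) (𝓝 (f 0 / (1 + b 0 * u ^ 2))) := by
  set g := fun θ => f θ / (1 + b θ * u ^ 2)
  have hg : ContinuousAt g 0 :=
    hf.div (continuousAt_const.add (hb.mul continuousAt_const)) (by positivity)
  have hind : ContinuousAt (s.indicator g) 0 :=
    hg.congr_of_eventuallyEq (eventually_of_mem hs fun θ hθ => indicator_of_mem hθ g)
  have hscale : Tendsto (fun ε => √ε * u) (𝓝[>] 0) (𝓝 0) := by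
    have h : Tendsto (fun ε => √ε * u) (𝓝 0) (𝓝 (√0 * u)) :=
      (continuous_sqrt.mul continuous_const).tendsto 0
    rw [sqrt_zero, zero_mul] at h
    exact h.mono_left nhdsWithin_le_nhds
  have h := hind.tendsto.comp hscale
  rwa [indicator_of_mem (mem_of_mem_nhds hs) g] at h

theorem tendsto_sqrt_mul_setIntegral_div_add_mul_sq {s : Set ℝ} (hs : IsCompact s)
    (hs0 : s ∈ 𝓝 0) {f b : ℝ → ℝ} (hf : ContinuousOn f s) (hb : ContinuousOn b s)
    (hbpos : ∀ θ ∈ s, 0 < b θ) :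
    Tendsto (fun ε => √ε * ∫ θ in s, f θ / (ε + b θ * θ ^ 2)) (𝓝[>] 0)
      (𝓝 (f 0 * (π / √(b 0)))) := by
  have h0s : (0 : ℝ) ∈ s := mem_of_mem_nhds hs0
  obtain ⟨M, hM⟩ := hs.exists_bound_of_continuousOn hf
  obtain ⟨θ₀, hθ₀, hmin⟩ := hs.exists_isMinOn ⟨0, h0s⟩ hb
  have hb0 : 0 < b 0 := hbpos 0 h0s
  have hDCT := tendsto_integral_filter_of_dominated_convergence (l := 𝓝[>] (0 : ℝ))
    (fun u => M * (1 + b θ₀ * u ^ 2)⁻¹)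
    (.of_forall (aestronglyMeasurable_rescaledIntegrand hs.measurableSet hf hb hbpos))
    (.of_forall fun ε => .of_forall fun u =>
      abs_rescaledIntegrand_le ((norm_nonneg _).trans (hM 0 h0s)) hM (hbpos θ₀ hθ₀).le
        (fun θ hθ => hmin hθ) ε u)
    ((integrable_inv_one_add_mul_sq (hbpos θ₀ hθ₀)).const_mul M)
    (.of_forall (tendsto_rescaledIntegrand hs0 (hf.continuousAt hs0) (hb.continuousAt hs0) hb0))
  simp only [div_eq_mul_inv (f 0), integral_const_mul, integral_inv_one_add_mul_sq hb0] at hDCT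
  refine hDCT.congr' (eventually_nhdsWithin_of_forall fun ε hε => ?_)
  exact (sqrt_mul_setIntegral_eq_integral_rescaledIntegrand hs.measurableSet f b hε).symm

theorem sqrt_eps_limit (a b : ℝ → ℝ)
    (ha : ContinuousOn a (Set.Icc (-Real.pi) Real.pi))
    (hb : ContinuousOn b (Set.Icc (-Real.pi) Real.pi))
    (hbpos : ∀ θ ∈ Set.Icc (-Real.pi) Real.pi, 0 < b θ) :
    Filter.Tendsto
      (fun ε : ℝ => Real.sqrt ε *
        ∫ θ in (-Real.pi)..Real.pi, (a θ / b θ) * (1 / (ε + b θ * θ ^ 2)))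
      (nhdsWithin 0 (Set.Ioi 0))
      (nhds ((a 0 / b 0) * (Real.pi / Real.sqrt (b 0)))) := by
  have h0 : Icc (-π) π ∈ 𝓝 0 := Icc_mem_nhds (neg_neg_iff_pos.2 pi_pos) pi_pos
  have h := tendsto_sqrt_mul_setIntegral_div_add_mul_sq isCompact_Icc h0
    (ha.div hb fun θ hθ => (hbpos θ hθ).ne') hb hbpos
  simp only [intervalIntegral.integral_of_le (neg_le_self pi_pos.le), ← integral_Icc_eq_integral_Ioc,
    mul_one_div]
  exact h
end

section
/- Let a, b : [−π, π] → ℝ be continuous with b everywhere strictly positive, a(0) ≠ 0, and ∫_{−π}^{π} a(θ)/b(θ) dθ = 0. Define I(ε) = ∫_{−π}^{π} a(θ)θ²/(ε + b(θ)θ²) dθ. Then for all sufficiently small ε > 0, sign(I(ε)) = −sign(a(0)). -/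
open Set intervalIntegral

set_option maxHeartbeats 1000000 in
private lemma aux_neg (a b : ℝ → ℝ)
    (ha : ContinuousOn a (Set.Icc (-Real.pi) Real.pi))
    (hb : ContinuousOn b (Set.Icc (-Real.pi) Real.pi))
    (hbpos : ∀ θ ∈ Set.Icc (-Real.pi) Real.pi, 0 < b θ)
    (ha0 : 0 < a 0)
    (hzero : ∫ θ in (-Real.pi)..Real.pi, a θ / b θ = 0) :
    ∃ ε₀ > 0, ∀ ε : ℝ, 0 < ε → ε < ε₀ →
      (∫ θ in (-Real.pi)..Real.pi, a θ * θ ^ 2 / (ε + b θ * θ ^ 2)) < 0 := by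
  have hπ := Real.pi_pos
  have h0mem : (0:ℝ) ∈ Icc (-Real.pi) Real.pi := ⟨by linarith, by linarith⟩
  have hb0 : 0 < b 0 := hbpos 0 h0mem
  have hnhds : Icc (-Real.pi) Real.pi ∈ nhds (0:ℝ) := Icc_mem_nhds (by linarith) hπ
  have haC : ContinuousAt a 0 := ha.continuousAt hnhds
  have hbC : ContinuousAt b 0 := hb.continuousAt hnhds
  obtain ⟨δ₁, hδ₁, hA⟩ := Metric.continuousAt_iff.mp haC (a 0 / 2) (by linarith)
  obtain ⟨δ₂, hδ₂, hB⟩ := Metric.continuousAt_iff.mp hbC (b 0) hb0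
  set δ : ℝ := min (min δ₁ δ₂) Real.pi / 2 with hδdef
  have hδ : 0 < δ := by positivity
  have hδπ : δ < Real.pi := by
    have : min (min δ₁ δ₂) Real.pi ≤ Real.pi := min_le_right _ _
    simp only [hδdef]; linarith
  have hδ1 : δ < δ₁ := by
    have h1 : min (min δ₁ δ₂) Real.pi ≤ δ₁ := le_trans (min_le_left _ _) (min_le_left _ _)
    simp only [hδdef]; linarith
  have hδ2 : δ < δ₂ := by
    have h1 : min (min δ₁ δ₂) Real.pi ≤ δ₂ := le_trans (min_le_left _ _) (min_le_right _ _)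
    simp only [hδdef]; linarith
  -- near-0 bounds
  have hanear : ∀ θ : ℝ, |θ| ≤ δ → a 0 / 2 ≤ a θ := by
    intro θ hθ
    have := hA (x := θ) (by simpa [Real.dist_eq] using lt_of_le_of_lt hθ hδ1)
    rw [Real.dist_eq] at this
    have := abs_lt.mp this
    linarith [this.1]
  have hbnear : ∀ θ : ℝ, |θ| ≤ δ → b θ ≤ 2 * b 0 := by
    intro θ hθ
    have := hB (x := θ) (by simpa [Real.dist_eq] using lt_of_le_of_lt hθ hδ2)
    rw [Real.dist_eq] at this
    have := abs_lt.mp this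
    linarith [this.2]
  -- min of b and max of |a|
  obtain ⟨xm, hxm, hmle'⟩ := isCompact_Icc.exists_isMinOn ⟨0, h0mem⟩ hb
  have hmle := isMinOn_iff.mp hmle'
  set m : ℝ := b xm with hmdef
  have hm : 0 < m := hbpos xm hxm
  obtain ⟨xM, hxM, hMge'⟩ := isCompact_Icc.exists_isMaxOn ⟨0, h0mem⟩ ha.abs
  have hMge := isMaxOn_iff.mp hMge'
  set M : ℝ := |a xM| with hMdef
  have hM : 0 < M := lt_of_lt_of_le (by simpa [abs_of_pos ha0] using ha0) (hMge 0 h0mem)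
  set c : ℝ := a 0 / (4 * b 0 * (1 + 2 * b 0)) with hcdef
  have hc : 0 < c := by positivity
  set C : ℝ := M / (m ^ 2 * δ ^ 2) with hCdef
  have hC : 0 < C := by positivity
  refine ⟨min (δ ^ 2) ((c / (Real.pi * C)) ^ 2), by positivity, ?_⟩
  intro ε hε hεlt
  have hεδ : ε < δ ^ 2 := lt_of_lt_of_le hεlt (min_le_left _ _)
  have hεc : ε < (c / (Real.pi * C)) ^ 2 := lt_of_lt_of_le hεlt (min_le_right _ _)
  set s : ℝ := Real.sqrt ε with hsdef
  have hs : 0 < s := Real.sqrt_pos.mpr hε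
  have hss : s * s = ε := Real.mul_self_sqrt hε.le
  have hsδ : s < δ := by
    have := Real.sqrt_lt_sqrt hε.le hεδ
    rwa [Real.sqrt_sq hδ.le] at this
  have hsc : s < c / (Real.pi * C) := by
    have h1 : 0 < c / (Real.pi * C) := by positivity
    have := Real.sqrt_lt_sqrt hε.le hεc
    rwa [Real.sqrt_sq h1.le] at this
  set f : ℝ → ℝ := fun θ => a θ * ε / (b θ * (ε + b θ * θ ^ 2)) with hfdef
  have hden : ∀ θ ∈ Icc (-Real.pi) Real.pi, 0 < ε + b θ * θ ^ 2 := by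
    intro θ hθ
    have := hbpos θ hθ
    positivity
  have hfcont : ContinuousOn f (Icc (-Real.pi) Real.pi) := by
    apply ContinuousOn.div (ha.mul continuousOn_const)
      ((hb.mul (continuousOn_const.add (hb.mul (continuous_pow 2).continuousOn))))
    intro θ hθ
    exact ne_of_gt (mul_pos (hbpos θ hθ) (hden θ hθ))
  have huIcc : ∀ x y : ℝ, -Real.pi ≤ x → x ≤ y → y ≤ Real.pi →
      uIcc x y ⊆ Icc (-Real.pi) Real.pi := by
    intro x y h1 h2 h3
    rw [uIcc_of_le h2]
    exact Icc_subset_Icc h1 h3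
  have hfint : ∀ x y : ℝ, -Real.pi ≤ x → x ≤ y → y ≤ Real.pi →
      IntervalIntegrable f MeasureTheory.volume x y := by
    intro x y h1 h2 h3
    exact (hfcont.mono (huIcc x y h1 h2 h3)).intervalIntegrable
  -- key identity: I = -∫ f
  have hI : (∫ θ in (-Real.pi)..Real.pi, a θ * θ ^ 2 / (ε + b θ * θ ^ 2))
      = - ∫ θ in (-Real.pi)..Real.pi, f θ := by
    have habint : IntervalIntegrable (fun θ => a θ / b θ) MeasureTheory.volume
        (-Real.pi) Real.pi := by
      apply ContinuousOn.intervalIntegrable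
      apply ContinuousOn.mono (s := Icc (-Real.pi) Real.pi) _
        (huIcc _ _ le_rfl (by linarith) le_rfl)
      exact ha.div hb (fun θ hθ => ne_of_gt (hbpos θ hθ))
    have hcongr : (∫ θ in (-Real.pi)..Real.pi, a θ * θ ^ 2 / (ε + b θ * θ ^ 2))
        = ∫ θ in (-Real.pi)..Real.pi, (a θ / b θ - f θ) := by
      apply intervalIntegral.integral_congr
      intro θ hθ
      have hθ' : θ ∈ Icc (-Real.pi) Real.pi := huIcc _ _ le_rfl (by linarith) le_rfl hθ
      have h1 := hbpos θ hθ'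
      have h2 := hden θ hθ'
      simp only [hfdef]
      field_simp
      ring
    rw [hcongr, intervalIntegral.integral_sub habint
      (hfint _ _ le_rfl (by linarith) le_rfl), hzero, zero_sub]
  rw [hI, neg_lt, neg_zero]
  -- now show 0 < ∫ f
  have i1 := hfint (-Real.pi) (-δ) le_rfl (by linarith) (by linarith)
  have i2 := hfint (-δ) δ (by linarith) (by linarith) (by linarith)
  have i3 := hfint δ Real.pi (by linarith) (by linarith) le_rfl
  have e1 := intervalIntegral.integral_add_adjacent_intervals i1 i2
  have e2 := intervalIntegral.integral_add_adjacent_intervals (i1.trans i2) i3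
  have k1 := hfint (-δ) (-s) (by linarith) (by linarith) (by linarith)
  have k2 := hfint (-s) s (by linarith) (by linarith) (by linarith)
  have k3 := hfint s δ (by linarith) (by linarith) (by linarith)
  have e3 := intervalIntegral.integral_add_adjacent_intervals k1 k2
  have e4 := intervalIntegral.integral_add_adjacent_intervals (k1.trans k2) k3
  -- middle lower bound
  have hfnonneg : ∀ θ ∈ Icc (-δ) δ, 0 ≤ f θ := by
    intro θ hθ
    have hab : |θ| ≤ δ := abs_le.mpr ⟨hθ.1, hθ.2⟩
    have hθ' : θ ∈ Icc (-Real.pi) Real.pi := ⟨by linarith [hθ.1], by linarith [hθ.2]⟩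
    have h1 := hanear θ hab
    have h2 := hbpos θ hθ'
    have h3 := hden θ hθ'
    have h4 : 0 ≤ a θ := by linarith
    simp only [hfdef]
    positivity
  have j1 : (0:ℝ) ≤ ∫ θ in (-δ)..(-s), f θ :=
    intervalIntegral.integral_nonneg (by linarith)
      (fun u hu => hfnonneg u ⟨hu.1, by linarith [hu.2]⟩)
  have j3 : (0:ℝ) ≤ ∫ θ in s..δ, f θ :=
    intervalIntegral.integral_nonneg (by linarith)
      (fun u hu => hfnonneg u ⟨by linarith [hu.1], hu.2⟩)
  have jcore : 2 * s * c ≤ ∫ θ in (-s)..s, f θ := by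
    have hcore : ∀ θ ∈ Icc (-s) s, c ≤ f θ := by
      intro θ hθ
      have hab : |θ| ≤ s := abs_le.mpr ⟨hθ.1, hθ.2⟩
      have habδ : |θ| ≤ δ := le_trans hab hsδ.le
      have hθ' : θ ∈ Icc (-Real.pi) Real.pi :=
        ⟨by linarith [hθ.1, hsδ, hδπ], by linarith [hθ.2, hsδ, hδπ]⟩
      have h1 := hanear θ habδ
      have h2 := hbnear θ habδ
      have h3 := hbpos θ hθ'
      have h4 := hden θ hθ'
      have hθsq : θ ^ 2 ≤ ε :=
        calc θ ^ 2 ≤ s ^ 2 := sq_le_sq' hθ.1 hθ.2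
        _ = ε := by rw [sq]; exact hss
      have hDle : b θ * (ε + b θ * θ ^ 2) ≤ 2 * b 0 * (ε + 2 * b 0 * ε) := by
        have hb2 : b θ * θ ^ 2 ≤ 2 * b 0 * ε :=
          mul_le_mul h2 hθsq (sq_nonneg θ) (by linarith)
        exact mul_le_mul h2 (by linarith) h4.le (by linarith)
      have hnum : a 0 / 2 * ε ≤ a θ * ε := mul_le_mul_of_nonneg_right h1 hε.le
      have key : (a 0 / 2 * ε) / (2 * b 0 * (ε + 2 * b 0 * ε)) ≤ f θ :=
        div_le_div₀ (mul_nonneg (by linarith) hε.le) hnum (mul_pos h3 h4) hDle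
      have hceq : c = (a 0 / 2 * ε) / (2 * b 0 * (ε + 2 * b 0 * ε)) := by
        rw [hcdef, div_eq_div_iff (by positivity) (by positivity)]
        ring
      rw [hceq]
      exact key
    have hmono := intervalIntegral.integral_mono_on (by linarith : -s ≤ s)
      (_root_.intervalIntegrable_const (c := c)) k2 hcore
    rw [intervalIntegral.integral_const, smul_eq_mul] at hmono
    calc 2 * s * c = (s - -s) * c := by ring
    _ ≤ _ := hmono
  -- tail bounds
  have hCe : C * ε = M * ε / (m ^ 2 * δ ^ 2) := by
    rw [hCdef, div_mul_eq_mul_div]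
  have htail : ∀ x : ℝ, x ∈ Icc (-Real.pi) Real.pi → δ ^ 2 ≤ x ^ 2 → ‖f x‖ ≤ C * ε := by
    intro x hx hx2
    have hbx := hmle x hx
    have haxM := hMge x hx
    have hdx := hden x hx
    have hbxp := hbpos x hx
    have hDge : m ^ 2 * δ ^ 2 ≤ b x * (ε + b x * x ^ 2) := by
      have hA1 : m * m ≤ b x * b x := mul_le_mul hbx hbx hm.le hbxp.le
      have hA2 : m * m * δ ^ 2 ≤ b x * b x * x ^ 2 :=
        mul_le_mul hA1 hx2 (by positivity) (by positivity)
      calc m ^ 2 * δ ^ 2 = m * m * δ ^ 2 := by ring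
      _ ≤ b x * b x * x ^ 2 := hA2
      _ = b x * (b x * x ^ 2) := by ring
      _ ≤ b x * (ε + b x * x ^ 2) :=
        mul_le_mul_of_nonneg_left (by linarith) hbxp.le
    have habs : ‖f x‖ = |a x| * ε / (b x * (ε + b x * x ^ 2)) := by
      simp only [hfdef, Real.norm_eq_abs, abs_div, abs_mul,
        abs_of_pos hε, abs_of_pos (mul_pos hbxp hdx)]
    rw [habs, hCe]
    exact div_le_div₀ (by positivity) (mul_le_mul_of_nonneg_right haxM hε.le) (by positivity) hDge
  have ht3 : -(C * ε * Real.pi) ≤ ∫ θ in δ..Real.pi, f θ := by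
    have hnorm := intervalIntegral.norm_integral_le_of_norm_le_const
      (f := f) (a := δ) (b := Real.pi) (C := C * ε) (by
        intro x hx
        rw [Set.uIoc_of_le (by linarith : δ ≤ Real.pi)] at hx
        exact htail x ⟨by linarith [hx.1], hx.2⟩
          (pow_le_pow_left₀ hδ.le hx.1.le 2))
    rw [Real.norm_eq_abs, abs_of_nonneg (by linarith : (0:ℝ) ≤ Real.pi - δ)] at hnorm
    have hmul : C * ε * (Real.pi - δ) ≤ C * ε * Real.pi :=
      mul_le_mul_of_nonneg_left (by linarith) (by positivity)
    exact (abs_le.mp (hnorm.trans hmul)).1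
  have ht1 : -(C * ε * Real.pi) ≤ ∫ θ in (-Real.pi)..(-δ), f θ := by
    have hnorm := intervalIntegral.norm_integral_le_of_norm_le_const
      (f := f) (a := -Real.pi) (b := -δ) (C := C * ε) (by
        intro x hx
        rw [Set.uIoc_of_le (by linarith : -Real.pi ≤ -δ)] at hx
        refine htail x ⟨hx.1.le, by linarith [hx.2]⟩ ?_
        have h2 : δ ≤ -x := by linarith [hx.2]
        calc δ ^ 2 ≤ (-x) ^ 2 := pow_le_pow_left₀ hδ.le h2 2
        _ = x ^ 2 := by ring)
    rw [Real.norm_eq_abs, abs_of_nonneg (by linarith : (0:ℝ) ≤ -δ - -Real.pi)] at hnorm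
    have hmul : C * ε * (-δ - -Real.pi) ≤ C * ε * Real.pi :=
      mul_le_mul_of_nonneg_left (by linarith) (by positivity)
    exact (abs_le.mp (hnorm.trans hmul)).1
  -- conclude
  have hkey : C * ε * Real.pi < c * s := by
    have h1 : s * (Real.pi * C) < c := (lt_div_iff₀ (by positivity)).mp hsc
    calc C * ε * Real.pi = s * (Real.pi * C) * s := by rw [← hss]; ring
    _ < c * s := mul_lt_mul_of_pos_right h1 hs
  have hmid : 2 * s * c ≤ ∫ θ in (-δ)..δ, f θ := by
    rw [← e4, ← e3]
    linarith
  linarith [e1, e2, ht1, ht3, hmid, hkey]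

theorem sign_I_small_eps (a b : ℝ → ℝ)
    (ha : ContinuousOn a (Set.Icc (-Real.pi) Real.pi))
    (hb : ContinuousOn b (Set.Icc (-Real.pi) Real.pi))
    (hbpos : ∀ θ ∈ Set.Icc (-Real.pi) Real.pi, 0 < b θ)
    (ha0 : a 0 ≠ 0)
    (hzero : ∫ θ in (-Real.pi)..Real.pi, a θ / b θ = 0) :
    ∃ ε₀ > 0, ∀ ε : ℝ, 0 < ε → ε < ε₀ →
      Real.sign (∫ θ in (-Real.pi)..Real.pi, a θ * θ ^ 2 / (ε + b θ * θ ^ 2)) =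
        -Real.sign (a 0) := by
  rcases ha0.lt_or_gt with hneg | hpos
  · obtain ⟨ε₀, hε₀, h⟩ := aux_neg (fun θ => -a θ) b ha.neg hb hbpos
      (by simpa using hneg)
      (by simp only [neg_div]; rw [intervalIntegral.integral_neg, hzero, neg_zero])
    refine ⟨ε₀, hε₀, fun ε h1 h2 => ?_⟩
    have hlt := h ε h1 h2
    have heq : (∫ θ in (-Real.pi)..Real.pi, -a θ * θ ^ 2 / (ε + b θ * θ ^ 2))
        = - ∫ θ in (-Real.pi)..Real.pi, a θ * θ ^ 2 / (ε + b θ * θ ^ 2) := by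
      simp only [neg_mul, neg_div]
      exact intervalIntegral.integral_neg
    rw [heq, neg_lt, neg_zero] at hlt
    rw [Real.sign_of_pos hlt, Real.sign_of_neg hneg]
    norm_num
  · obtain ⟨ε₀, hε₀, h⟩ := aux_neg a b ha hb hbpos hpos hzero
    refine ⟨ε₀, hε₀, fun ε h1 h2 => ?_⟩
    rw [Real.sign_of_neg (h ε h1 h2), Real.sign_of_pos hpos]
end

section
/- Let a, b : [−π, π] → ℝ be continuous with b everywhere strictly positive, and suppose the functions θ ↦ (b(−θ)−b(θ))/θ and θ ↦ (a(θ)b(−θ)−b(θ)a(−θ))/θ extend continuously to θ = 0. Define J(ε) = ∫_{0}^{π} θ·[ (a(θ)/b(θ))·1/(ε + b(θ)θ²) − (a(−θ)/b(−θ))·1/(ε + b(−θ)θ²) ] dθ for ε ≥ 0. Then lim_{ε→0⁺} J(ε) = J(0) = ∫_{0}^{π} (1/θ)·[ a(θ)/b(θ)² − a(−θ)/b(−θ)² ] dθ. -/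
/-!
Subtracting the two fractions, the integrand is
`a(θ) θ⁴ q₁(θ) / (b(θ) D₊ D₋) + θ² q₂(θ) / (b(θ) b(-θ) D₋)`, where `D± = ε + b(±θ) θ²` and
`q₁, q₂` are the two difference quotients of the hypotheses. These are bounded on `(0, π]`
(continuous there, with limits at `0`) and `b ≥ m > 0`, so both terms are bounded by
constants independent of `ε ≥ 0`. Dominated convergence then gives `J ε → J 0`, and at
`ε = 0` the integrand is the one of the closed formula.
-/

open Set Filter Function MeasureTheory
open scoped Topology

noncomputable def integrandJ (a b : ℝ → ℝ) (ε θ : ℝ) : ℝ :=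
  θ * ((a θ / b θ) * (1 / (ε + b θ * θ ^ 2)) - (a (-θ) / b (-θ)) * (1 / (ε + b (-θ) * θ ^ 2)))

lemma integrandJ_zero (a b : ℝ → ℝ) (θ : ℝ) :
    integrandJ a b 0 θ = 1 / θ * (a θ / b θ ^ 2 - a (-θ) / b (-θ) ^ 2) := by
  rcases eq_or_ne θ 0 with rfl | hθ
  · simp [integrandJ]
  · simp only [integrandJ, zero_add]
    field_simp

lemma exists_pos_le_of_continuousOn {f : ℝ → ℝ} {s : Set ℝ} (hs : IsCompact s)
    (hf : ContinuousOn f s) (hpos : ∀ x ∈ s, 0 < f x) : ∃ m > 0, ∀ x ∈ s, m ≤ f x := by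
  rcases s.eq_empty_or_nonempty with rfl | hne
  · exact ⟨1, one_pos, by simp⟩
  · obtain ⟨x₀, hx₀, hmin⟩ := hs.exists_isMinOn hne hf
    exact ⟨f x₀, hpos x₀ hx₀, fun x hx => hmin hx⟩

lemma exists_abs_le_on_Ioc_of_tendsto {g : ℝ → ℝ} {c L : ℝ}
    (hg : Tendsto g (𝓝[≠] 0) (𝓝 L)) (hc : ContinuousOn g (Ioc 0 c)) :
    ∃ M, ∀ θ ∈ Ioc 0 c, |g θ| ≤ M := by
  classical
  have hext : ContinuousOn (update g 0 L) (Icc 0 c) := by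
    rw [continuousOn_update_iff, Icc_sdiff_left]
    exact ⟨hc, fun _ => hg.mono_left (nhdsWithin_mono _ fun θ hθ => hθ.1.ne')⟩
  obtain ⟨M, hM⟩ := isCompact_Icc.exists_bound_of_continuousOn hext
  refine ⟨M, fun θ hθ => ?_⟩
  simpa [update_of_ne hθ.1.ne'] using hM θ (Ioc_subset_Icc_self hθ)

lemma abs_integrandJ_le_of_bounds {x y p q θ ε m A M₁ M₂ : ℝ} (hm : 0 < m) (hp : m ≤ p)
    (hq : m ≤ q) (hθ : 0 < θ) (hε : 0 ≤ ε) (hx : |x| ≤ A) (h₁ : |(q - p) / θ| ≤ M₁)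
    (h₂ : |(x * q - p * y) / θ| ≤ M₂) :
    |θ * (x / p * (1 / (ε + p * θ ^ 2)) - y / q * (1 / (ε + q * θ ^ 2)))| ≤
      (A * M₁ + M₂) / m ^ 3 := by
  have hp₀ : 0 < p := hm.trans_le hp
  have hq₀ : 0 < q := hm.trans_le hq
  have hD₁ : m * θ ^ 2 ≤ ε + p * θ ^ 2 := by nlinarith
  have hD₂ : m * θ ^ 2 ≤ ε + q * θ ^ 2 := by nlinarith
  have hsplit : θ * (x / p * (1 / (ε + p * θ ^ 2)) - y / q * (1 / (ε + q * θ ^ 2))) =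
      x * θ ^ 4 * ((q - p) / θ) / (p * (ε + p * θ ^ 2) * (ε + q * θ ^ 2)) +
      θ ^ 2 * ((x * q - p * y) / θ) / (p * q * (ε + q * θ ^ 2)) := by
    field_simp
    ring
  have hA : 0 ≤ A := (abs_nonneg x).trans hx
  have hM₁ : 0 ≤ M₁ := (abs_nonneg _).trans h₁
  have hM₂ : 0 ≤ M₂ := (abs_nonneg _).trans h₂
  have hden₁ : 0 < p * (ε + p * θ ^ 2) * (ε + q * θ ^ 2) := by positivity
  have hden₂ : 0 < p * q * (ε + q * θ ^ 2) := by positivity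
  have hfirst : |x * θ ^ 4 * ((q - p) / θ) / (p * (ε + p * θ ^ 2) * (ε + q * θ ^ 2))| ≤
      A * M₁ / m ^ 3 := by
    calc _ = |x| * θ ^ 4 * |(q - p) / θ| / (p * (ε + p * θ ^ 2) * (ε + q * θ ^ 2)) := by
          rw [abs_div, abs_of_pos hden₁, abs_mul, abs_mul, abs_pow, abs_of_pos hθ]
      _ ≤ A * θ ^ 4 * M₁ / (m * (m * θ ^ 2) * (m * θ ^ 2)) := by gcongr
      _ = A * M₁ / m ^ 3 := by field_simp
  have hsecond : |θ ^ 2 * ((x * q - p * y) / θ) / (p * q * (ε + q * θ ^ 2))| ≤ M₂ / m ^ 3 := by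
    calc _ = θ ^ 2 * |(x * q - p * y) / θ| / (p * q * (ε + q * θ ^ 2)) := by
          rw [abs_div, abs_of_pos hden₂, abs_mul, abs_pow, abs_of_pos hθ]
      _ ≤ θ ^ 2 * M₂ / (m * m * (m * θ ^ 2)) := by gcongr
      _ = M₂ / m ^ 3 := by field_simp
  calc _ ≤ _ := hsplit ▸ abs_add_le _ _
    _ ≤ A * M₁ / m ^ 3 + M₂ / m ^ 3 := add_le_add hfirst hsecond
    _ = (A * M₁ + M₂) / m ^ 3 := by ring

section Integrand

variable {a b : ℝ → ℝ} {c : ℝ}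

lemma mem_Icc_neg_of_mem_Ioc {θ : ℝ} (h : θ ∈ Ioc 0 c) : θ ∈ Icc (-c) c ∧ -θ ∈ Icc (-c) c := by
  obtain ⟨h₀, hc⟩ := h
  exact ⟨⟨by linarith, hc⟩, ⟨by linarith, by linarith⟩⟩

lemma ContinuousOn.comp_neg_Ioc {f : ℝ → ℝ} (hf : ContinuousOn f (Icc (-c) c)) :
    ContinuousOn (fun θ => f (-θ)) (Ioc 0 c) :=
  hf.comp continuous_neg.continuousOn fun _ hθ => (mem_Icc_neg_of_mem_Ioc hθ).2

lemma continuousOn_integrandJ (ha : ContinuousOn a (Icc (-c) c))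
    (hb : ContinuousOn b (Icc (-c) c)) (hbpos : ∀ θ ∈ Icc (-c) c, 0 < b θ) {ε : ℝ}
    (hε : 0 ≤ ε) : ContinuousOn (integrandJ a b ε) (Ioc 0 c) := by
  have hsub : Ioc 0 c ⊆ Icc (-c) c := fun _ hθ => (mem_Icc_neg_of_mem_Ioc hθ).1
  have half : ∀ f g : ℝ → ℝ, ContinuousOn f (Ioc 0 c) → ContinuousOn g (Ioc 0 c) →
      (∀ θ ∈ Ioc 0 c, 0 < g θ) →
      ContinuousOn (fun θ => f θ / g θ * (1 / (ε + g θ * θ ^ 2))) (Ioc 0 c) :=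
    fun f g hf hg hg₀ => (hf.div hg fun θ hθ => (hg₀ θ hθ).ne').mul <|
      continuousOn_const.div (continuousOn_const.add (hg.mul (continuousOn_pow 2)))
        fun θ hθ => by have := hg₀ θ hθ; have := hθ.1; positivity
  exact continuousOn_id.mul <|
    (half _ _ (ha.mono hsub) (hb.mono hsub) fun θ hθ => hbpos θ (hsub hθ)).sub
      (half _ _ ha.comp_neg_Ioc hb.comp_neg_Ioc fun θ hθ =>
        hbpos _ (mem_Icc_neg_of_mem_Ioc hθ).2)

lemma exists_abs_integrandJ_le (ha : ContinuousOn a (Icc (-c) c))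
    (hb : ContinuousOn b (Icc (-c) c)) (hbpos : ∀ θ ∈ Icc (-c) c, 0 < b θ) {L₁ L₂ : ℝ}
    (h₁ : Tendsto (fun θ => (b (-θ) - b θ) / θ) (𝓝[≠] 0) (𝓝 L₁))
    (h₂ : Tendsto (fun θ => (a θ * b (-θ) - b θ * a (-θ)) / θ) (𝓝[≠] 0) (𝓝 L₂)) :
    ∃ C, ∀ ε, 0 ≤ ε → ∀ θ ∈ Ioc 0 c, |integrandJ a b ε θ| ≤ C := by
  have hsub : Ioc 0 c ⊆ Icc (-c) c := fun _ hθ => (mem_Icc_neg_of_mem_Ioc hθ).1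
  have hθ₀ : ∀ θ ∈ Ioc 0 c, θ ≠ 0 := fun θ hθ => hθ.1.ne'
  obtain ⟨m, hm, hmb⟩ := exists_pos_le_of_continuousOn isCompact_Icc hb hbpos
  obtain ⟨A, hA⟩ := isCompact_Icc.exists_bound_of_continuousOn ha
  obtain ⟨M₁, hM₁⟩ := exists_abs_le_on_Ioc_of_tendsto h₁ <|
    (hb.comp_neg_Ioc.sub (hb.mono hsub)).div continuousOn_id hθ₀
  obtain ⟨M₂, hM₂⟩ := exists_abs_le_on_Ioc_of_tendsto h₂ <|
    (((ha.mono hsub).mul hb.comp_neg_Ioc).sub ((hb.mono hsub).mul ha.comp_neg_Ioc)).div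
      continuousOn_id hθ₀
  refine ⟨(A * M₁ + M₂) / m ^ 3, fun ε hε θ hθ => ?_⟩
  obtain ⟨hθ_mem, hθ_neg⟩ := mem_Icc_neg_of_mem_Ioc hθ
  exact abs_integrandJ_le_of_bounds hm (hmb _ hθ_mem) (hmb _ hθ_neg) hθ.1 hε (hA _ hθ_mem)
    (hM₁ θ hθ) (hM₂ θ hθ)

lemma tendsto_integral_integrandJ (hc : 0 ≤ c) (ha : ContinuousOn a (Icc (-c) c))
    (hb : ContinuousOn b (Icc (-c) c)) (hbpos : ∀ θ ∈ Icc (-c) c, 0 < b θ) {L₁ L₂ : ℝ}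
    (h₁ : Tendsto (fun θ => (b (-θ) - b θ) / θ) (𝓝[≠] 0) (𝓝 L₁))
    (h₂ : Tendsto (fun θ => (a θ * b (-θ) - b θ * a (-θ)) / θ) (𝓝[≠] 0) (𝓝 L₂)) :
    Tendsto (fun ε => ∫ θ in 0..c, integrandJ a b ε θ) (𝓝[>] 0)
      (𝓝 (∫ θ in 0..c, integrandJ a b 0 θ)) := by
  obtain ⟨C, hC⟩ := exists_abs_integrandJ_le ha hb hbpos h₁ h₂
  have hε : ∀ᶠ ε in 𝓝[>] (0 : ℝ), 0 ≤ ε := eventually_nhdsWithin_of_forall fun _ h => le_of_lt h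
  refine intervalIntegral.tendsto_integral_filter_of_dominated_convergence (fun _ => C) ?_ ?_
    intervalIntegrable_const ?_ <;> simp only [uIoc_of_le hc]
  · filter_upwards [hε] with ε hε
    exact (continuousOn_integrandJ ha hb hbpos hε).aestronglyMeasurable measurableSet_Ioc
  · filter_upwards [hε] with ε hε
    exact ae_of_all _ fun θ hθ => hC ε hε θ hθ
  · refine ae_of_all _ fun θ hθ => ContinuousWithinAt.tendsto ?_
    obtain ⟨hθ_mem, hθ_neg⟩ := mem_Icc_neg_of_mem_Ioc hθ
    have := hbpos _ hθ_mem
    have := hbpos _ hθ_neg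
    have := hθ.1
    unfold integrandJ
    fun_prop (disch := positivity)

end Integrand

theorem J_limit (a b : ℝ → ℝ)
    (ha : ContinuousOn a (Set.Icc (-Real.pi) Real.pi))
    (hb : ContinuousOn b (Set.Icc (-Real.pi) Real.pi))
    (hbpos : ∀ θ ∈ Set.Icc (-Real.pi) Real.pi, 0 < b θ)
    (hext1 : ∃ L₁ : ℝ, Filter.Tendsto (fun θ : ℝ => (b (-θ) - b θ) / θ)
      (nhdsWithin 0 {(0:ℝ)}ᶜ) (nhds L₁))
    (hext2 : ∃ L₂ : ℝ, Filter.Tendsto (fun θ : ℝ => (a θ * b (-θ) - b θ * a (-θ)) / θ)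
      (nhdsWithin 0 {(0:ℝ)}ᶜ) (nhds L₂))
    (J : ℝ → ℝ)
    (hJ : ∀ ε : ℝ, 0 ≤ ε → J ε = ∫ θ in (0:ℝ)..Real.pi,
      θ * ((a θ / b θ) * (1 / (ε + b θ * θ ^ 2)) -
           (a (-θ) / b (-θ)) * (1 / (ε + b (-θ) * θ ^ 2)))) :
    Filter.Tendsto J (nhdsWithin 0 (Set.Ioi 0)) (nhds (J 0)) ∧
    J 0 = ∫ θ in (0:ℝ)..Real.pi,
      (1 / θ) * (a θ / (b θ) ^ 2 - a (-θ) / (b (-θ)) ^ 2) := by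
  obtain ⟨L₁, h₁⟩ := hext1
  obtain ⟨L₂, h₂⟩ := hext2
  have hJ₀ : J 0 = ∫ θ in (0:ℝ)..Real.pi, integrandJ a b 0 θ := hJ 0 le_rfl
  refine ⟨?_, by simp only [hJ₀, integrandJ_zero]⟩
  rw [hJ₀]
  refine (tendsto_integral_integrandJ Real.pi_pos.le ha hb hbpos h₁ h₂).congr' ?_
  filter_upwards [self_mem_nhdsWithin] with ε hε using (hJ ε (le_of_lt hε)).symm
end
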